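/- arXiv:cs/0112011 — 3 statements merged into one kernel-verified Lean document; each statement's English description precedes it below -/
import Mathlib

section
/- Let D be a multiset of transactions (finite sets of items), Pos and Neg disjoint finite sets of items, and let D₀ := {t \ (Pos ∪ Neg) | t ∈ D, Pos ⊆ t} (as a multiset). For any itemset Z with Pos ⊆ Z and Z ∩ Neg = ∅, the support of Z in D (number of transactions t ∈ D with Z ⊆ t) equals the support of Z \ Pos in D₀. -/
/-- The support of an itemset `X` in a multiset `D` of transactions. -/
def supp {I : Type*} [DecidableEq I] (D : Multiset (Finset I)) (X : Finset I) : ℕ :=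
  Multiset.countP (fun t => X ⊆ t) D

/-- For `Z` with `Pos ⊆ Z` and `Z ∩ Neg = ∅`, the support of `Z`
in `D` equals the support of `Z \ Pos` in the reduced database `D₀`. -/
theorem supp_eq_supp_reduced {I : Type*} [DecidableEq I]
    (D : Multiset (Finset I)) (Pos Neg Z : Finset I)
    (hPN : Disjoint Pos Neg) (hPos : Pos ⊆ Z) (hNeg : Disjoint Z Neg) :
    supp D Z =
      supp ((D.filter (fun t => Pos ⊆ t)).map (fun t => t \ (Pos ∪ Neg))) (Z \ Pos) := by
  unfold supp
  rw [Multiset.countP_map, Multiset.filter_filter, ← Multiset.countP_eq_card_filter]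
  apply Multiset.countP_congr rfl
  intro t _
  apply propext
  constructor
  · intro hZ
    refine ⟨fun x hx => ?_, hPos.trans hZ⟩
    simp only [Finset.mem_sdiff, Finset.mem_union] at hx ⊢
    exact ⟨hZ hx.1, fun h => h.elim hx.2 (fun hn => hNeg.forall_ne_finset hx.1 hn rfl)⟩
  · rintro ⟨h1, h2⟩ x hx
    by_cases hp : x ∈ Pos
    · exact h2 hp
    · have := h1 (Finset.mem_sdiff.mpr ⟨hx, hp⟩)
      exact (Finset.mem_sdiff.mp this).1
end

section
/- With D, D₀, Pos, Neg as above and support threshold p: the collection S of itemsets Z over D with Pos ⊆ Z, Z ∩ Neg = ∅, and support at least p in D equals { s ∪ Pos | s ∈ S₀ }, where S₀ is the collection of itemsets s with s ∩ (Pos ∪ Neg) = ∅ and support at least p in D₀. -/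
lemma supp_aux {I : Type*} [DecidableEq I]
    (D : Multiset (Finset I)) (Pos Neg : Finset I) (s : Finset I)
    (hs : Disjoint s (Pos ∪ Neg)) :
    supp ((D.filter (fun t => Pos ⊆ t)).map (fun t => t \ (Pos ∪ Neg))) s
      = supp D (s ∪ Pos) := by
  unfold supp
  rw [Multiset.countP_map]
  rw [show (Multiset.filter (fun t => s ⊆ t \ (Pos ∪ Neg)) (Multiset.filter (fun t => Pos ⊆ t) D))
      = Multiset.filter (fun t => s ∪ Pos ⊆ t) D from ?_]
  · rw [Multiset.countP_eq_card_filter]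
  · rw [Multiset.filter_filter]
    apply Multiset.filter_congr
    intro t _
    simp only [Finset.subset_sdiff, Finset.union_subset_iff]
    constructor
    · rintro ⟨⟨h1, _⟩, h2⟩; exact ⟨h1, h2⟩
    · rintro ⟨h1, h2⟩; exact ⟨⟨h1, hs⟩, h2⟩

/-- Lemma 2: the itemsets satisfying the set-query over `D` that
are frequent are exactly the sets `s ∪ Pos` for `s` frequent over `D₀`. -/
theorem frequent_setQuery_eq_image {I : Type*} [DecidableEq I]
    (D : Multiset (Finset I)) (Pos Neg : Finset I) (p : ℕ)
    (hPN : Disjoint Pos Neg) :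
    {Z : Finset I | Pos ⊆ Z ∧ Disjoint Z Neg ∧ p ≤ supp D Z} =
      (fun s => s ∪ Pos) ''
        {s : Finset I | Disjoint s (Pos ∪ Neg) ∧
          p ≤ supp ((D.filter (fun t => Pos ⊆ t)).map (fun t => t \ (Pos ∪ Neg))) s} := by
  ext Z
  simp only [Set.mem_setOf_eq, Set.mem_image]
  constructor
  · rintro ⟨hPos, hNeg, hp⟩
    have hdisj : Disjoint (Z \ (Pos ∪ Neg)) (Pos ∪ Neg) := Finset.sdiff_disjoint
    have hZ : Z \ (Pos ∪ Neg) ∪ Pos = Z := by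
      ext x
      simp only [Finset.mem_union, Finset.mem_sdiff]
      constructor
      · rintro (⟨hx, _⟩ | hx)
        · exact hx
        · exact hPos hx
      · intro hx
        by_cases hxP : x ∈ Pos
        · exact Or.inr hxP
        · exact Or.inl ⟨hx, fun h =>
            h.elim hxP (Finset.disjoint_left.mp hNeg hx)⟩
    refine ⟨Z \ (Pos ∪ Neg), ⟨hdisj, ?_⟩, hZ⟩
    rw [supp_aux D Pos Neg _ hdisj, hZ]
    exact hp
  · rintro ⟨s, ⟨hs, hp⟩, rfl⟩
    rw [supp_aux D Pos Neg s hs] at hp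
    refine ⟨Finset.subset_union_right, ?_, hp⟩
    rw [Finset.disjoint_union_left]
    exact ⟨hs.mono_right Finset.subset_union_right, hPN⟩
end

section
/- Characterization of bodies: Let S₀ be the itemsets over D₀ with support ≥ p (all disjoint from Pos ∪ Neg), where Pos = B ∪ H, Neg = B' ∩ H'. Then the set of bodies X of rules X ⇒ Y satisfying the rule-query with X ∪ Y frequent in D equals { s ∪ B | s ∈ S₀, s ∩ (B' ∪ H) = ∅ }. -/
lemma supp_mono {I : Type*} [DecidableEq I] (D : Multiset (Finset I)) {X Y : Finset I}
    (h : X ⊆ Y) : supp D Y ≤ supp D X := by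
  unfold supp
  rw [Multiset.countP_eq_card_filter, Multiset.countP_eq_card_filter]
  exact Multiset.card_le_card (Multiset.monotone_filter_right D fun t ht => h.trans ht)

lemma supp_map_eq {I : Type*} [DecidableEq I] (D : Multiset (Finset I))
    (P Q s : Finset I) (hs : Disjoint s P) :
    supp ((D.filter (fun t => Q ⊆ t)).map (fun t => t \ P)) s = supp D (s ∪ Q) := by
  unfold supp
  rw [Multiset.countP_map, ← Multiset.countP_eq_card_filter, Multiset.countP_filter]
  apply Multiset.countP_congr rfl
  intro t _
  simp only [eq_iff_iff, Finset.union_subset_iff]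
  constructor
  · rintro ⟨h1, h2⟩
    exact ⟨fun x hx => (Finset.mem_sdiff.mp (h1 hx)).1, h2⟩
  · rintro ⟨h1, h2⟩
    refine ⟨fun x hx => Finset.mem_sdiff.mpr ⟨h1 hx, fun hP => ?_⟩, h2⟩
    exact (Finset.disjoint_left.mp hs hx) hP

/-- Lemma 3, bodies: the bodies of rules satisfying the rule-query
whose underlying set is frequent in `D` are exactly the sets `s ∪ B` for
`s ∈ S₀` with `s ∩ (B' ∪ H) = ∅`. -/
theorem bodies_eq_image {I : Type*} [DecidableEq I]
    (D : Multiset (Finset I)) (B B' H H' : Finset I) (p : ℕ)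
    (hBB' : Disjoint B B') (hHH' : Disjoint H H') (hBH : Disjoint B H) :
    {X : Finset I | ∃ Y : Finset I,
        B ⊆ X ∧ Disjoint X B' ∧ H ⊆ Y ∧ Disjoint Y H' ∧ Disjoint X Y ∧
        p ≤ supp D (X ∪ Y)} =
      (fun s => s ∪ B) ''
        {s : Finset I | Disjoint s ((B ∪ H) ∪ (B' ∩ H')) ∧ Disjoint s (B' ∪ H) ∧
          p ≤ supp ((D.filter (fun t => (B ∪ H) ⊆ t)).map
                (fun t => t \ ((B ∪ H) ∪ (B' ∩ H')))) s} := by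
  ext X
  simp only [Set.mem_setOf_eq, Set.mem_image]
  constructor
  · rintro ⟨Y, hBX, hXB', hHY, hYH', hXY, hp⟩
    have hXH : Disjoint X H := hXY.mono_right hHY
    refine ⟨X \ B, ⟨?_, ?_, ?_⟩, ?_⟩
    · rw [Finset.disjoint_left]
      intro x hx hxP
      have hx' := Finset.mem_sdiff.mp hx
      rcases Finset.mem_union.mp hxP with h | h
      · rcases Finset.mem_union.mp h with h | h
        · exact hx'.2 h
        · exact Finset.disjoint_left.mp hXH hx'.1 h
      · exact Finset.disjoint_left.mp hXB' hx'.1 (Finset.mem_inter.mp h).1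
    · rw [Finset.disjoint_left]
      intro x hx hxP
      have hx' := Finset.mem_sdiff.mp hx
      rcases Finset.mem_union.mp hxP with h | h
      · exact Finset.disjoint_left.mp hXB' hx'.1 h
      · exact Finset.disjoint_left.mp hXH hx'.1 h
    · rw [supp_map_eq]
      · refine le_trans hp (supp_mono D ?_)
        intro x hx
        rcases Finset.mem_union.mp hx with h | h
        · exact Finset.mem_union_left _ (Finset.mem_sdiff.mp h).1
        · rcases Finset.mem_union.mp h with h | h
          · exact Finset.mem_union_left _ (hBX h)
          · exact Finset.mem_union_right _ (hHY h)
      · rw [Finset.disjoint_left]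
        intro x hx hxP
        have hx' := Finset.mem_sdiff.mp hx
        rcases Finset.mem_union.mp hxP with h | h
        · rcases Finset.mem_union.mp h with h | h
          · exact hx'.2 h
          · exact Finset.disjoint_left.mp hXH hx'.1 h
        · exact Finset.disjoint_left.mp hXB' hx'.1 (Finset.mem_inter.mp h).1
    · exact Finset.sdiff_union_of_subset hBX
  · rintro ⟨s, ⟨h1, h2, hp⟩, rfl⟩
    have hsB' : Disjoint s B' := h2.mono_right Finset.subset_union_left
    have hsH : Disjoint s H := h2.mono_right Finset.subset_union_right
    refine ⟨H, Finset.subset_union_right, Finset.disjoint_union_left.mpr ⟨hsB', hBB'⟩,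
      subset_rfl, hHH', Finset.disjoint_union_left.mpr ⟨hsH, hBH⟩, ?_⟩
    rw [supp_map_eq _ _ _ _ h1] at hp
    rwa [Finset.union_assoc]
end
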